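/- arXiv:2603.02159 — 5 statements merged into one kernel-verified Lean document; each statement's English description precedes it below -/
import Mathlib

section
/- Let n, m be positive natural numbers, K an invertible n × n real matrix, A an n × m real matrix, and c a nonzero real number such that Aᵀ·K·A + c·Iₘ is invertible. Then the n × n matrix K·A·Aᵀ·K + c·K is invertible and (K·A·Aᵀ·K + c·K)⁻¹·K·A = A·(Aᵀ·K·A + c·Iₘ)⁻¹. Consequently, for every vector k ∈ ℝⁿ (the test kernel vector) and every y ∈ ℝᵐ, the Kernel IV estimate kᵀ·(K·A·Aᵀ·K + c·K)⁻¹·K·A·y equals the GPIV posterior-mean estimate kᵀ·A·(Aᵀ·K·A + c·Iₘ)⁻¹·y. -/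
/-! Factor `K·A·Aᵀ·K + c·K = K·(A·(Aᵀ·K) + c·I)`. The push-through identity
`(A·B + c·I)·A = A·(B·A + c·I)`, together with Sylvester's determinant identity
(`A·B + c·I` is invertible iff `B·A + c·I` is, for `c ≠ 0`), gives
`(A·B + c·I)⁻¹·A = A·(B·A + c·I)⁻¹`; apply it with `B = Aᵀ·K`. -/

open Matrix

namespace Matrix

variable {m n : Type*} [Fintype m] [Fintype n] [DecidableEq m] [DecidableEq n]

theorem mul_add_smul_one_mul_comm {R : Type*} [CommSemiring R] (A : Matrix m n R)
    (B : Matrix n m R) (c : R) : (A * B + c • 1) * A = A * (B * A + c • 1) := by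
  simp only [Matrix.add_mul, Matrix.mul_add, Matrix.smul_mul, Matrix.mul_smul, Matrix.one_mul,
    Matrix.mul_one, Matrix.mul_assoc]

theorem inv_mul_eq_mul_inv_of_mul_eq {R : Type*} [CommRing R] {P : Matrix m m R}
    {Q : Matrix n n R} {X : Matrix m n R} (hP : IsUnit P.det) (hQ : IsUnit Q.det)
    (hPQ : P * X = X * Q) : P⁻¹ * X = X * Q⁻¹ :=
  calc P⁻¹ * X = P⁻¹ * (X * Q) * Q⁻¹ := by
        rw [← Matrix.mul_assoc, mul_nonsing_inv_cancel_right _ _ hQ]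
    _ = X * Q⁻¹ := by rw [← hPQ, nonsing_inv_mul_cancel_left _ _ hP]

variable {𝕜 : Type*} [Field 𝕜] {c : 𝕜}

theorem isUnit_mul_add_smul_one_comm (hc : c ≠ 0) (A : Matrix m n 𝕜) (B : Matrix n m 𝕜) :
    IsUnit (A * B + c • 1) ↔ IsUnit (B * A + c • 1) := by
  have hAB : A * B + c • 1 = c • ((c⁻¹ • A) * B + 1) := by
    rw [smul_add, Matrix.smul_mul, smul_smul, mul_inv_cancel₀ hc, one_smul]
  have hBA : B * A + c • 1 = c • (B * (c⁻¹ • A) + 1) := by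
    rw [smul_add, Matrix.mul_smul, smul_smul, mul_inv_cancel₀ hc, one_smul]
  rw [isUnit_iff_isUnit_det, isUnit_iff_isUnit_det, hAB, hBA, det_smul, det_smul,
    det_mul_add_one_comm]
  simp [isUnit_iff_ne_zero, hc]

theorem inv_mul_add_smul_one_mul_comm (hc : c ≠ 0) (A : Matrix m n 𝕜) (B : Matrix n m 𝕜) :
    (A * B + c • 1)⁻¹ * A = A * (B * A + c • 1)⁻¹ := by
  by_cases hBA : IsUnit (B * A + c • 1)
  · have hAB := (isUnit_mul_add_smul_one_comm hc A B).2 hBA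
    rw [isUnit_iff_isUnit_det] at hAB hBA
    exact inv_mul_eq_mul_inv_of_mul_eq hAB hBA (mul_add_smul_one_mul_comm A B c)
  · -- both inverses are then the junk value `0`
    have hAB := mt (isUnit_mul_add_smul_one_comm hc A B).1 hBA
    rw [isUnit_iff_isUnit_det] at hAB hBA
    rw [nonsing_inv_apply_not_isUnit _ hAB, nonsing_inv_apply_not_isUnit _ hBA,
      Matrix.zero_mul, Matrix.mul_zero]

end Matrix

theorem kiv_div_gpiv_equiv_general (n m : ℕ)
    (K : Matrix (Fin n) (Fin n) ℝ) (hK : IsUnit K)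
    (A : Matrix (Fin n) (Fin m) ℝ) (c : ℝ) (hc : c ≠ 0)
    (h : IsUnit (Aᵀ * K * A + c • (1 : Matrix (Fin m) (Fin m) ℝ))) :
    IsUnit (K * A * Aᵀ * K + c • K) ∧
    (K * A * Aᵀ * K + c • K)⁻¹ * (K * A) =
      A * (Aᵀ * K * A + c • (1 : Matrix (Fin m) (Fin m) ℝ))⁻¹ ∧
    ∀ (k : Fin n → ℝ) (y : Fin m → ℝ),
      k ⬝ᵥ (((K * A * Aᵀ * K + c • K)⁻¹ * K * A).mulVec y) =
      k ⬝ᵥ ((A * (Aᵀ * K * A + c • (1 : Matrix (Fin m) (Fin m) ℝ))⁻¹).mulVec y) := by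
  have hfactor : K * A * Aᵀ * K + c • K = K * (A * (Aᵀ * K) + c • 1) := by
    simp only [Matrix.mul_add, Matrix.mul_smul, Matrix.mul_one, Matrix.mul_assoc]
  have hKdet : IsUnit K.det := (isUnit_iff_isUnit_det K).1 hK
  have hinv : (K * A * Aᵀ * K + c • K)⁻¹ * (K * A) =
      A * (Aᵀ * K * A + c • (1 : Matrix (Fin m) (Fin m) ℝ))⁻¹ := by
    rw [hfactor, Matrix.mul_inv_rev, Matrix.mul_assoc, nonsing_inv_mul_cancel_left _ _ hKdet,
      inv_mul_add_smul_one_mul_comm hc]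
  refine ⟨hfactor ▸ hK.mul ((isUnit_mul_add_smul_one_comm hc _ _).2 h), hinv, fun k y => ?_⟩
  rw [Matrix.mul_assoc _ K A, hinv]

/-- Equivalence of the KIV, DIV, and GPIV estimators. Let `K` be an invertible `n × n`
real matrix, `A` an `n × m` real matrix, `c ≠ 0` such that `Aᵀ·K·A + c·Iₘ` is invertible.
Then `K·A·Aᵀ·K + c·K` is invertible, `(K·A·Aᵀ·K + c·K)⁻¹·K·A = A·(Aᵀ·K·A + c·Iₘ)⁻¹`, and
for every test kernel vector `k` and outcome vector `y`, the KIV estimate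
`kᵀ·(K·A·Aᵀ·K + c·K)⁻¹·K·A·y` equals the GPIV posterior-mean estimate
`kᵀ·A·(Aᵀ·K·A + c·Iₘ)⁻¹·y`. -/
theorem kiv_div_gpiv_equiv (n m : ℕ) (hn : 0 < n) (hm : 0 < m)
    (K : Matrix (Fin n) (Fin n) ℝ) (hK : IsUnit K)
    (A : Matrix (Fin n) (Fin m) ℝ) (c : ℝ) (hc : c ≠ 0)
    (h : IsUnit (Aᵀ * K * A + c • (1 : Matrix (Fin m) (Fin m) ℝ))) :
    IsUnit (K * A * Aᵀ * K + c • K) ∧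
    (K * A * Aᵀ * K + c • K)⁻¹ * (K * A) =
      A * (Aᵀ * K * A + c • (1 : Matrix (Fin m) (Fin m) ℝ))⁻¹ ∧
    ∀ (k : Fin n → ℝ) (y : Fin m → ℝ),
      k ⬝ᵥ (((K * A * Aᵀ * K + c • K)⁻¹ * K * A).mulVec y) =
      k ⬝ᵥ ((A * (Aᵀ * K * A + c • (1 : Matrix (Fin m) (Fin m) ℝ))⁻¹).mulVec y) :=
  kiv_div_gpiv_equiv_general n m K hK A c hc h
end

section
/- Let n be a positive natural number, M a symmetric invertible n × n real matrix, and c a nonzero real number such that M + c·Iₙ is invertible. Then the matrix M·Mᵀ + c·M is invertible and (M·Mᵀ + c·M)⁻¹·M = (M + c·Iₙ)⁻¹. Consequently, for every row vector r ∈ ℝⁿ and every y ∈ ℝⁿ, the KNC weight vector (M·Mᵀ + c·M)⁻¹·M·y equals the GPProxy weight vector (M + c·Iₙ)⁻¹·y, and hence r·(M·Mᵀ + c·M)⁻¹·M·y = r·(M + c·Iₙ)⁻¹·y. -/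
open Matrix

/-- Equivalence of the GPProxy posterior mean and the KNC estimator. Let `M` be a
symmetric invertible `n × n` real matrix and `c ≠ 0` with `M + c·Iₙ` invertible. Then
`M·Mᵀ + c·M` is invertible, `(M·Mᵀ + c·M)⁻¹·M = (M + c·Iₙ)⁻¹`, the KNC weight vector
`(M·Mᵀ + c·M)⁻¹·M·y` equals the GPProxy weight vector `(M + c·Iₙ)⁻¹·y`, and hence
`r·(M·Mᵀ + c·M)⁻¹·M·y = r·(M + c·Iₙ)⁻¹·y` for every row vector `r`. -/
theorem gpproxy_knc_equiv (n : ℕ) (hn : 0 < n)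
    (M : Matrix (Fin n) (Fin n) ℝ) (hMsymm : Mᵀ = M) (hM : IsUnit M)
    (c : ℝ) (hc : c ≠ 0)
    (h : IsUnit (M + c • (1 : Matrix (Fin n) (Fin n) ℝ))) :
    IsUnit (M * Mᵀ + c • M) ∧
    (M * Mᵀ + c • M)⁻¹ * M = (M + c • (1 : Matrix (Fin n) (Fin n) ℝ))⁻¹ ∧
    (∀ y : Fin n → ℝ,
      ((M * Mᵀ + c • M)⁻¹ * M).mulVec y =
        (M + c • (1 : Matrix (Fin n) (Fin n) ℝ))⁻¹.mulVec y) ∧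
    (∀ (r y : Fin n → ℝ),
      r ⬝ᵥ (((M * Mᵀ + c • M)⁻¹ * M).mulVec y) =
      r ⬝ᵥ ((M + c • (1 : Matrix (Fin n) (Fin n) ℝ))⁻¹.mulVec y)) := by
  have key : M * Mᵀ + c • M = M * (M + c • (1 : Matrix (Fin n) (Fin n) ℝ)) := by
    rw [hMsymm, mul_add, mul_smul_comm, mul_one]
  have hu : IsUnit (M * Mᵀ + c • M) := by rw [key]; exact hM.mul h
  have hinv : (M * Mᵀ + c • M)⁻¹ * M = (M + c • (1 : Matrix (Fin n) (Fin n) ℝ))⁻¹ := by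
    rw [key, Matrix.mul_inv_rev, mul_assoc, Matrix.nonsing_inv_mul M
      (Matrix.isUnit_iff_isUnit_det M |>.mp hM), mul_one]
  exact ⟨hu, hinv, fun y => by rw [hinv], fun r y => by rw [hinv]⟩
end

section
/- Let n be a positive natural number, G an invertible n × n real matrix, B an n × n real matrix, and c a nonzero real number such that Bᵀ·G·B + c·Iₙ is invertible. Then the matrix G·B·Bᵀ·G + c·G is invertible and (G·B·Bᵀ·G + c·G)⁻¹·G·B = B·(Bᵀ·G·B + c·Iₙ)⁻¹. Consequently, for every row vector r ∈ ℝⁿ and every y ∈ ℝⁿ, r·(G·B·Bᵀ·G + c·G)⁻¹·G·B·y = r·B·(Bᵀ·G·B + c·Iₙ)⁻¹·y. -/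
open Matrix

lemma det_mul_add_smul_one_comm (n : ℕ) (A C : Matrix (Fin n) (Fin n) ℝ)
    (c : ℝ) (hc : c ≠ 0) :
    (A * C + c • (1 : Matrix (Fin n) (Fin n) ℝ)).det
      = (C * A + c • (1 : Matrix (Fin n) (Fin n) ℝ)).det := by
  have h1 : A * C + c • (1 : Matrix (Fin n) (Fin n) ℝ)
      = c • ((1 : Matrix (Fin n) (Fin n) ℝ) + (c⁻¹ • A) * C) := by
    rw [smul_add, smul_mul_assoc, smul_smul, mul_inv_cancel₀ hc, one_smul, add_comm]
  have h2 : C * A + c • (1 : Matrix (Fin n) (Fin n) ℝ)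
      = c • ((1 : Matrix (Fin n) (Fin n) ℝ) + C * (c⁻¹ • A)) := by
    rw [smul_add, mul_smul_comm, smul_smul, mul_inv_cancel₀ hc, one_smul, add_comm]
  rw [h1, h2, det_smul, det_smul, Matrix.det_one_add_mul_comm]

/-- Equivalence of the DProxy and KNC-orig estimators. Let `G` be an invertible `n × n`
real matrix, `B` an `n × n` real matrix and `c ≠ 0` with `Bᵀ·G·B + c·Iₙ` invertible.
Then `G·B·Bᵀ·G + c·G` is invertible,
`(G·B·Bᵀ·G + c·G)⁻¹·G·B = B·(Bᵀ·G·B + c·Iₙ)⁻¹`, and consequently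
`r·(G·B·Bᵀ·G + c·G)⁻¹·G·B·y = r·B·(Bᵀ·G·B + c·Iₙ)⁻¹·y` for all vectors `r`, `y`. -/
theorem dproxy_kncorig_equiv (n : ℕ) (hn : 0 < n)
    (G : Matrix (Fin n) (Fin n) ℝ) (hG : IsUnit G)
    (B : Matrix (Fin n) (Fin n) ℝ) (c : ℝ) (hc : c ≠ 0)
    (h : IsUnit (Bᵀ * G * B + c • (1 : Matrix (Fin n) (Fin n) ℝ))) :
    IsUnit (G * B * Bᵀ * G + c • G) ∧
    (G * B * Bᵀ * G + c • G)⁻¹ * (G * B) =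
      B * (Bᵀ * G * B + c • (1 : Matrix (Fin n) (Fin n) ℝ))⁻¹ ∧
    ∀ (r y : Fin n → ℝ),
      r ⬝ᵥ (((G * B * Bᵀ * G + c • G)⁻¹ * G * B).mulVec y) =
      r ⬝ᵥ ((B * (Bᵀ * G * B + c • (1 : Matrix (Fin n) (Fin n) ℝ))⁻¹).mulVec y) := by
  set X : Matrix (Fin n) (Fin n) ℝ := B * Bᵀ * G + c • 1 with hX
  set Y : Matrix (Fin n) (Fin n) ℝ := Bᵀ * G * B + c • 1 with hY
  -- factorization
  have hfac : G * B * Bᵀ * G + c • G = G * X := by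
    rw [hX, Matrix.mul_add, Matrix.mul_smul, Matrix.mul_one]
    simp [Matrix.mul_assoc]
  -- invertibility of X
  have hdet : X.det = Y.det := by
    have := det_mul_add_smul_one_comm n B (Bᵀ * G) c hc
    rw [hX, hY]
    rw [Matrix.mul_assoc] at this ⊢
    rw [this, ← Matrix.mul_assoc]
  have hXunit : IsUnit X := by
    rw [Matrix.isUnit_iff_isUnit_det] at h ⊢
    rwa [hdet]
  have hMunit : IsUnit (G * B * Bᵀ * G + c • G) := by
    rw [hfac]; exact hG.mul hXunit
  -- push-through identity
  have hpush : X * B = B * Y := by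
    rw [hX, hY]
    simp only [Matrix.add_mul, Matrix.mul_add, Matrix.smul_mul, Matrix.mul_smul,
      Matrix.one_mul, Matrix.mul_one, Matrix.mul_assoc]
  have key : (G * B * Bᵀ * G + c • G)⁻¹ * (G * B) = B * Y⁻¹ := by
    rw [hfac, Matrix.mul_inv_rev, Matrix.mul_assoc, ← Matrix.mul_assoc G⁻¹,
      Matrix.nonsing_inv_mul G (((Matrix.isUnit_iff_isUnit_det G).mp hG)),
      Matrix.one_mul]
    have : X⁻¹ * B * Y = B := by
      rw [Matrix.mul_assoc, ← hpush, ← Matrix.mul_assoc,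
        Matrix.nonsing_inv_mul X (((Matrix.isUnit_iff_isUnit_det X).mp hXunit)),
        Matrix.one_mul]
    calc X⁻¹ * B = X⁻¹ * B * Y * Y⁻¹ := by
          rw [Matrix.mul_assoc (X⁻¹ * B),
            Matrix.mul_nonsing_inv Y (((Matrix.isUnit_iff_isUnit_det Y).mp h)),
            Matrix.mul_one]
      _ = B * Y⁻¹ := by rw [this]
  refine ⟨hMunit, key, ?_⟩
  intro r y
  rw [Matrix.mul_assoc, key]
end

section
/- Let (Ω, 𝔉, P) be a probability space, X a measurable space, and (f_x)_{x∈X} a centered Gaussian process on Ω with covariance function k(x, x′) = E[f_x·f_{x′}], such that each f_x ∈ L²(Ω, P) and the map x ↦ f_x ∈ L²(Ω, P) is strongly measurable. Let Z be an index set and (ν_z)_{z∈Z} a family of finite measures on X such that for each z the map x ↦ f_x is Bochner integrable in L²(Ω, P) with respect to ν_z. Define g_z = ∫ f_x dν_z(x) as a Bochner integral in L²(Ω, P). Then (g_z)_{z∈Z} is a centered Gaussian process with covariance function q(z, z′) = E[g_z·g_{z′}] = ∬ k(x, x′) dν_z(x) dν_{z′}(x′). -/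
/-
Every finite combination `∑ cᵢ f_{xᵢ}` is a centered Gaussian, so every element of the linear span
of `{f_x}` in `L²(Ω, P)` has a centered Gaussian law. This property passes to `L²`-limits: the
variances are the squared `L²` norms, hence converge, and `L²` convergence implies convergence in
law, so Lévy's continuity theorem identifies the limit law as a centered Gaussian. Each Bochner
integral `g_z` is orthogonal to everything orthogonal to the `f_x`, so it lies in the closed span,
and so do all combinations of the `g_z`. The covariance formula is obtained by pulling the inner
product of `L²` through both Bochner integrals.
-/

open MeasureTheory ProbabilityTheory

/-- A process `(f_t)_{t ∈ T}` on a measure space `(Ω, P)` is a centered Gaussian process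
if every finite real linear combination `∑ i, c i * f (t i)` is a centered real Gaussian
random variable. -/
def IsCenteredGaussianProcess {Ω T : Type*} [MeasurableSpace Ω]
    (P : Measure Ω) (f : T → Ω → ℝ) : Prop :=
  ∀ (n : ℕ) (t : Fin n → T) (c : Fin n → ℝ), ∃ v : NNReal,
    P.map (fun ω => ∑ i, c i * f (t i) ω) = gaussianReal 0 v

open Filter Set Submodule Topology
open scoped RealInnerProductSpace NNReal

section InnerProductSpace

variable {E : Type*} [NormedAddCommGroup E] [InnerProductSpace ℝ E] [CompleteSpace E]
  {X Y : Type*} [MeasurableSpace X] [MeasurableSpace Y]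

theorem integral_mem_topologicalClosure_span_range (μ : Measure X) (f : X → E) :
    ∫ x, f x ∂μ ∈ (span ℝ (range f)).topologicalClosure := by
  by_cases hf : Integrable f μ
  · rw [← orthogonal_orthogonal_eq_closure, mem_orthogonal]
    intro u hu
    have hu_f : ∀ x, ⟪u, f x⟫ = 0 := fun x =>
      inner_left_of_mem_orthogonal (subset_span (mem_range_self x)) hu
    simp [← integral_inner hf, hu_f]
  · rw [integral_undef hf]
    exact zero_mem _

theorem inner_integral_integral {μ : Measure X} {ν : Measure Y} {f : X → E} {h : Y → E}
    (hf : Integrable f μ) (hh : Integrable h ν) :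
    ⟪∫ x, f x ∂μ, ∫ y, h y ∂ν⟫ = ∫ y, ∫ x, ⟪f x, h y⟫ ∂μ ∂ν := by
  rw [← integral_inner hh]
  refine integral_congr_ae (Eventually.of_forall fun y => ?_)
  dsimp only
  rw [real_inner_comm, ← integral_inner hf]
  simp_rw [real_inner_comm]

end InnerProductSpace

lemma integral_sq_gaussianReal_zero (v : ℝ≥0) : ∫ x, x ^ 2 ∂gaussianReal 0 v = v := by
  rw [← variance_fun_id_gaussianReal (μ := 0),
    variance_of_integral_eq_zero aemeasurable_id' integral_id_gaussianReal]

lemma tendsto_gaussianReal (m : ℝ) {v : ℕ → ℝ≥0} {v₀ : ℝ≥0} (hv : Tendsto v atTop (𝓝 v₀)) :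
    Tendsto (β := ProbabilityMeasure ℝ) (fun n => ⟨gaussianReal m (v n), inferInstance⟩) atTop
      (𝓝 ⟨gaussianReal m v₀, inferInstance⟩) := by
  refine ProbabilityMeasure.tendsto_of_tendsto_charFun fun t => ?_
  simp only [ProbabilityMeasure.coe_mk, charFun_gaussianReal]
  have hv' : Tendsto (fun n => ((v n : ℝ) : ℂ)) atTop (𝓝 ((v₀ : ℝ) : ℂ)) :=
    Complex.continuous_ofReal.continuousAt.tendsto.comp (NNReal.tendsto_coe.mpr hv)
  exact (Complex.continuous_exp.tendsto _).comp ((hv'.mul_const _).div_const _ |>.const_sub _)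

namespace MeasureTheory.Lp

variable {Ω : Type*} [MeasurableSpace Ω] {P : Measure Ω}

lemma coeFn_sum_smul {ι : Type*} [Fintype ι] {p : ENNReal} (c : ι → ℝ) (F : ι → Lp ℝ p P) :
    ⇑(∑ i, c i • F i) =ᵐ[P] fun ω => ∑ i, c i * F i ω := by
  have hsmul : ∀ᵐ ω ∂P, ∀ i, (c i • F i) ω = c i * F i ω :=
    ae_all_iff.mpr fun i => coeFn_smul (c i) (F i)
  filter_upwards [coeFn_fun_finsetSum Finset.univ (fun i => c i • F i), hsmul] with ω hsum hsmul
  rw [hsum]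
  exact Finset.sum_congr rfl fun i _ => hsmul i

lemma inner_eq_integral_mul (Y Y' : Lp ℝ 2 P) : ⟪Y, Y'⟫ = ∫ ω, Y ω * Y' ω ∂P := by
  simp [L2.inner_def, mul_comm]

lemma integral_sq_eq_norm_sq (Y : Lp ℝ 2 P) : ∫ ω, Y ω ^ 2 ∂P = ‖Y‖ ^ 2 := by
  simp_rw [sq, ← real_inner_self_eq_norm_mul_norm, inner_eq_integral_mul]

lemma norm_sq_eq_of_map_eq_gaussianReal {Y : Lp ℝ 2 P} {v : ℝ≥0}
    (hY : P.map Y = gaussianReal 0 v) : (v : ℝ) = ‖Y‖ ^ 2 := by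
  rw [← integral_sq_gaussianReal_zero, ← hY,
    integral_map (Lp.aestronglyMeasurable Y).aemeasurable (by fun_prop), integral_sq_eq_norm_sq]

theorem isClosed_setOf_map_eq_gaussianReal [IsProbabilityMeasure P] :
    IsClosed {Y : Lp ℝ 2 P | ∃ v : ℝ≥0, P.map Y = gaussianReal 0 v} := by
  refine IsSeqClosed.isClosed fun Yn Y hYn hlim => ?_
  choose v hv using hYn
  have hv_tendsto : Tendsto v atTop (𝓝 (‖Y‖₊ ^ 2)) := by
    rw [← NNReal.tendsto_coe]
    simp_rw [fun n => norm_sq_eq_of_map_eq_gaussianReal (hv n)]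
    exact (continuous_norm.tendsto Y |>.comp hlim).pow 2
  have hlaw := ((tendstoInMeasure_of_tendsto_Lp hlim).tendstoInDistribution
    fun n => (Lp.aestronglyMeasurable (Yn n)).aemeasurable).tendsto
  have hgauss := tendsto_gaussianReal 0 hv_tendsto
  exact ⟨_, congrArg Subtype.val <| tendsto_nhds_unique (X := ProbabilityMeasure ℝ) hlaw
    (hgauss.congr fun n => Subtype.ext (hv n).symm)⟩

end MeasureTheory.Lp

section GaussianProcess

variable {Ω T S : Type*} [MeasurableSpace Ω] {P : Measure Ω}

theorem isCenteredGaussianProcess_iff_forall_mem_span {p : ENNReal} (f : T → Lp ℝ p P) :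
    IsCenteredGaussianProcess P (fun t => ⇑(f t)) ↔
      ∀ Y ∈ span ℝ (range f), ∃ v : ℝ≥0, P.map Y = gaussianReal 0 v := by
  have hcomb : ∀ n (t : Fin n → T) (c : Fin n → ℝ),
      P.map ⇑(∑ i, c i • f (t i)) = P.map fun ω => ∑ i, c i * f (t i) ω :=
    fun n t c => Measure.map_congr (Lp.coeFn_sum_smul c _)
  constructor
  · intro hf Y hY
    obtain ⟨n, c, y, rfl⟩ := mem_span_set'.mp hY
    choose t ht using fun i => (y i).2
    obtain ⟨v, hv⟩ := hf n t c
    refine ⟨v, ?_⟩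
    rw [← hv, ← hcomb]
    simp_rw [ht]
  · intro hspan n t c
    simp_rw [← hcomb]
    exact hspan _ (sum_mem fun i _ => smul_mem _ _ (subset_span (mem_range_self _)))

theorem IsCenteredGaussianProcess.of_mem_topologicalClosure_span [IsProbabilityMeasure P]
    {f : T → Lp ℝ 2 P} {g : S → Lp ℝ 2 P} (hf : IsCenteredGaussianProcess P (fun t => ⇑(f t)))
    (hg : ∀ s, g s ∈ (span ℝ (range f)).topologicalClosure) :
    IsCenteredGaussianProcess P (fun s => ⇑(g s)) := by
  rw [isCenteredGaussianProcess_iff_forall_mem_span] at hf ⊢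
  have hclosure : ((span ℝ (range f)).topologicalClosure : Set (Lp ℝ 2 P)) ⊆
      {Y | ∃ v : ℝ≥0, P.map Y = gaussianReal 0 v} :=
    closure_minimal hf Lp.isClosed_setOf_map_eq_gaussianReal
  have hspan : span ℝ (range g) ≤ (span ℝ (range f)).topologicalClosure :=
    span_le.mpr (range_subset_iff.mpr hg)
  exact fun Y hY => hclosure (hspan hY)

end GaussianProcess

theorem conditional_mean_process_IV_general
    {Ω : Type*} [MeasurableSpace Ω] (P : Measure Ω) [IsProbabilityMeasure P]
    {X : Type*} [MeasurableSpace X] {Z : Type*}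
    (f : X → Lp ℝ 2 P)
    (hGP : IsCenteredGaussianProcess P (fun x => ⇑(f x)))
    (k : X → X → ℝ) (hk : ∀ x x', k x x' = ∫ ω, f x ω * f x' ω ∂P)
    (ν : Z → Measure X)
    (hint : ∀ z, Integrable f (ν z))
    (g : Z → Lp ℝ 2 P) (hg : ∀ z, g z = ∫ x, f x ∂(ν z)) :
    IsCenteredGaussianProcess P (fun z => ⇑(g z)) ∧
    ∀ z z', (∫ ω, g z ω * g z' ω ∂P) = ∫ x', ∫ x, k x x' ∂(ν z) ∂(ν z') := by
  have hg_mem (z : Z) : g z ∈ (span ℝ (range f)).topologicalClosure :=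
    hg z ▸ integral_mem_topologicalClosure_span_range (ν z) f
  refine ⟨hGP.of_mem_topologicalClosure_span hg_mem, fun z z' => ?_⟩
  calc ∫ ω, g z ω * g z' ω ∂P = ⟪g z, g z'⟫ := (Lp.inner_eq_integral_mul _ _).symm
    _ = ∫ x', ∫ x, ⟪f x, f x'⟫ ∂ν z ∂ν z' := by
      rw [hg, hg, inner_integral_integral (hint z) (hint z')]
    _ = ∫ x', ∫ x, k x x' ∂ν z ∂ν z' := by simp_rw [hk, Lp.inner_eq_integral_mul]

/-- Conditional mean process for the IV setting. If `(f_x)` is a centered Gaussian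
process with covariance `k(x, x′) = E[f_x f_{x′}]`, with `x ↦ f_x ∈ L²(Ω, P)` strongly
measurable, and `(ν_z)` is a family of finite measures with respect to which `f` is
Bochner integrable, then `g_z = ∫ f_x dν_z(x)` is a centered Gaussian process with
covariance `q(z, z′) = E[g_z g_{z′}] = ∬ k(x, x′) dν_z(x) dν_{z′}(x′)`. -/
theorem conditional_mean_process_IV
    {Ω : Type*} [MeasurableSpace Ω] (P : Measure Ω) [IsProbabilityMeasure P]
    {X : Type*} [MeasurableSpace X] {Z : Type*}
    (f : X → Lp ℝ 2 P) (hmeas : StronglyMeasurable f)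
    (hGP : IsCenteredGaussianProcess P (fun x => ⇑(f x)))
    (k : X → X → ℝ) (hk : ∀ x x', k x x' = ∫ ω, f x ω * f x' ω ∂P)
    (ν : Z → Measure X) (hfin : ∀ z, IsFiniteMeasure (ν z))
    (hint : ∀ z, Integrable f (ν z))
    (g : Z → Lp ℝ 2 P) (hg : ∀ z, g z = ∫ x, f x ∂(ν z)) :
    IsCenteredGaussianProcess P (fun z => ⇑(g z)) ∧
    ∀ z z', (∫ ω, g z ω * g z' ω ∂P) = ∫ x', ∫ x, k x x' ∂(ν z) ∂(ν z') :=
  conditional_mean_process_IV_general P f hGP k hk ν hint g hg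
end

section
/- Let (Ω, 𝔉, P) be a probability space, let X and W be measurable spaces, and let (h_{(x,w)})_{(x,w)∈X×W} be a centered Gaussian process on Ω with product covariance function E[h_{(x,w)}·h_{(x′,w′)}] = k_X(x, x′)·k_W(w, w′), such that each h_{(x,w)} ∈ L²(Ω, P) and for each x the map w ↦ h_{(x,w)} ∈ L²(Ω, P) is strongly measurable. Let P_W be a probability measure on W such that for each x the map w ↦ h_{(x,w)} is Bochner integrable in L²(Ω, P) with respect to P_W, and define f_x = ∫ h_{(x,w)} dP_W(w) (Bochner integral in L²(Ω, P)). Then (f_x)_{x∈X} is a centered Gaussian process with covariance function r(x, x′) = k_X(x, x′) · c_W, where c_W = ∬ k_W(w, w′) dP_W(w) dP_W(w′). -/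
/-!
The finite linear combinations of the `h (x, w)` are centered Gaussians, so the linear span of
the bridge process in `L²(P)` consists of centered Gaussians. So does its closure: the law of an
`L²` random variable depends continuously on it, and a centered Gaussian is determined by its
variance, which is its squared `L²` norm. Each `f x` is a Bochner integral of elements of the
span, hence lies in its closure, and so does every linear combination of the `f x`. The covariance
comes from pulling both integrals out of the `L²` inner product.
-/

open MeasureTheory ProbabilityTheory

open Filter
open scoped NNReal ENNReal Topology InnerProductSpace

theorem continuous_gaussianReal_zero :
    Continuous (Y := ProbabilityMeasure ℝ) fun v : ℝ≥0 ↦ ⟨gaussianReal 0 v, inferInstance⟩ := by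
  have hscale : ∀ v : ℝ≥0, gaussianReal 0 v = (gaussianReal 0 1).map (√(v : ℝ) * ·) := by
    intro v
    rw [gaussianReal_map_const_mul, mul_zero, mul_one]
    congr
    ext
    simp
  refine continuous_iff_continuousAt.2 fun v₀ ↦ ?_
  have hlaw := (tendstoInDistribution_of_ae_tendsto (l := 𝓝 v₀) (μ' := gaussianReal 0 1)
    (X := fun (v : ℝ≥0) (x : ℝ) ↦ √(v : ℝ) * x) (Z := fun x ↦ √(v₀ : ℝ) * x)
    (fun _ ↦ by fun_prop) (by fun_prop)
    (ae_of_all _ fun x ↦ (NNReal.continuous_coe.sqrt.tendsto v₀).mul_const x)).tendsto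
  simp_rw [← hscale] at hlaw
  exact hlaw

theorem integral_mem_topologicalClosure {α 𝕜 E : Type*} [MeasurableSpace α] {μ : Measure α}
    [RCLike 𝕜] [NormedAddCommGroup E] [InnerProductSpace 𝕜 E] [NormedSpace ℝ E] [CompleteSpace E]
    {K : Submodule 𝕜 E} {g : α → E} (hg : Integrable g μ) (hK : ∀ a, g a ∈ K) :
    ∫ a, g a ∂μ ∈ K.topologicalClosure := by
  rw [← Submodule.orthogonal_orthogonal_eq_closure]
  intro u hu
  rw [← integral_inner hg]
  simp [Submodule.inner_left_of_mem_orthogonal (hK _) hu]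

theorem inner_integral_integral_s9 {α β E : Type*} [MeasurableSpace α] [MeasurableSpace β]
    {μ : Measure α} {ν : Measure β}
    [NormedAddCommGroup E] [InnerProductSpace ℝ E] [CompleteSpace E]
    {F : α → E} {G : β → E} (hF : Integrable F μ) (hG : Integrable G ν) :
    ⟪∫ a, F a ∂μ, ∫ b, G b ∂ν⟫_ℝ = ∫ b, ∫ a, ⟪F a, G b⟫_ℝ ∂μ ∂ν := by
  rw [← integral_inner hG]
  congr 1 with b
  rw [real_inner_comm, ← integral_inner hF]
  simp_rw [real_inner_comm]

namespace MeasureTheory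

variable {Ω : Type*} [MeasurableSpace Ω] {P : Measure Ω}

theorem L2.real_inner_eq_integral_mul (F G : Lp ℝ 2 P) : ⟪F, G⟫_ℝ = ∫ ω, F ω * G ω ∂P := by
  simp [L2.inner_def, mul_comm]

theorem Lp.coeFn_sum_smul_s9 {E ι : Type*} [NormedAddCommGroup E] [NormedSpace ℝ E] {p : ℝ≥0∞}
    [Fintype ι] (c : ι → ℝ) (F : ι → Lp E p P) :
    ⇑(∑ i, c i • F i) =ᵐ[P] fun ω ↦ ∑ i, c i • F i ω := by
  filter_upwards [Lp.coeFn_fun_finsetSum Finset.univ (fun i ↦ c i • F i),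
    ae_all_iff.2 fun i ↦ Lp.coeFn_smul (c i) (F i)] with ω hsum hsmul
  rw [hsum]
  simp only [hsmul, Pi.smul_apply]

theorem Lp.continuous_law {E : Type*} [NormedAddCommGroup E] [MeasurableSpace E] [BorelSpace E]
    {p : ℝ≥0∞} [Fact (1 ≤ p)] [IsProbabilityMeasure P] :
    Continuous (Y := ProbabilityMeasure E) fun Z : Lp E p P ↦
      ⟨P.map Z, Measure.isProbabilityMeasure_map (Lp.aestronglyMeasurable Z).aemeasurable⟩ :=
  continuous_iff_continuousAt.2 fun _ ↦
    ((tendstoInMeasure_of_tendsto_Lp tendsto_id).tendstoInDistribution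
      fun _ ↦ (Lp.aestronglyMeasurable _).aemeasurable).tendsto

end MeasureTheory

section CenteredGaussianL2

variable {Ω : Type*} [MeasurableSpace Ω] {P : Measure Ω}

def centeredGaussianL2 (P : Measure Ω) : Set (Lp ℝ 2 P) :=
  {Z | ∃ v : ℝ≥0, P.map Z = gaussianReal 0 v}

theorem isCenteredGaussianProcess_iff_span_subset {T : Type*} (F : T → Lp ℝ 2 P) :
    IsCenteredGaussianProcess P (fun t ↦ ⇑(F t)) ↔
      ↑(Submodule.span ℝ (Set.range F)) ⊆ centeredGaussianL2 P := by
  have hlaw : ∀ n (t : Fin n → T) (c : Fin n → ℝ),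
      P.map ⇑(∑ i, c i • F (t i)) = P.map fun ω ↦ ∑ i, c i * F (t i) ω :=
    fun n t c ↦ Measure.map_congr (Lp.coeFn_sum_smul_s9 c (F ∘ t))
  constructor
  · intro hGP Z hZ
    obtain ⟨n, c, g, rfl⟩ := Submodule.mem_span_set'.1 hZ
    choose t ht using fun i ↦ (g i).2
    obtain ⟨v, hv⟩ := hGP n t c
    refine ⟨v, ?_⟩
    simp_rw [← ht]
    rw [hlaw, hv]
  · intro hspan n t c
    obtain ⟨v, hv⟩ := hspan (Submodule.sum_mem _ fun i _ ↦
      Submodule.smul_mem _ _ (Submodule.subset_span ⟨t i, rfl⟩))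
    exact ⟨v, by rw [← hlaw, hv]⟩

theorem nnnorm_sq_eq_of_map_eq_gaussianReal {Z : Lp ℝ 2 P} {v : ℝ≥0}
    (hZ : P.map Z = gaussianReal 0 v) : ‖Z‖₊ ^ 2 = v := by
  have hnorm : ‖Z‖ ^ 2 = ∫ ω, Z ω ^ 2 ∂P := by
    rw [← real_inner_self_eq_norm_sq, L2.real_inner_eq_integral_mul]
    simp only [sq]
  have hsecond : ∫ x, x ^ 2 ∂(gaussianReal 0 v) = v := by
    have hvar := variance_fun_id_gaussianReal (μ := 0) (v := v)
    rw [variance_eq_integral (by fun_prop), integral_id_gaussianReal] at hvar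
    simpa using hvar
  ext
  push_cast
  rw [hnorm, ← hsecond, ← hZ, integral_map (Lp.aestronglyMeasurable Z).aemeasurable (by fun_prop)]

theorem isClosed_centeredGaussianL2 [IsProbabilityMeasure P] :
    IsClosed (centeredGaussianL2 P) := by
  have hnorm : Continuous fun Z : Lp ℝ 2 P ↦ ‖Z‖₊ ^ 2 := by fun_prop
  convert isClosed_eq Lp.continuous_law (continuous_gaussianReal_zero.comp hnorm) using 1
  ext Z
  refine ⟨fun ⟨v, hv⟩ ↦ Subtype.ext ?_, fun hZ ↦ ⟨_, congrArg Subtype.val hZ⟩⟩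
  change P.map Z = gaussianReal 0 (‖Z‖₊ ^ 2)
  rwa [nnnorm_sq_eq_of_map_eq_gaussianReal hv]

end CenteredGaussianL2

theorem marginalized_bridge_process_proxy_general
    {Ω : Type*} [MeasurableSpace Ω] (P : Measure Ω) [IsProbabilityMeasure P]
    {X W : Type*} [MeasurableSpace W]
    (h : X × W → Lp ℝ 2 P)
    (hGP : IsCenteredGaussianProcess P (fun p => ⇑(h p)))
    (kX : X → X → ℝ) (kW : W → W → ℝ)
    (hcov : ∀ x x' w w', (∫ ω, h (x, w) ω * h (x', w') ω ∂P) = kX x x' * kW w w')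
    (PW : Measure W)
    (hint : ∀ x, Integrable (fun w => h (x, w)) PW)
    (f : X → Lp ℝ 2 P) (hf : ∀ x, f x = ∫ w, h (x, w) ∂PW) :
    IsCenteredGaussianProcess P (fun x => ⇑(f x)) ∧
    ∀ x x', (∫ ω, f x ω * f x' ω ∂P)
      = kX x x' * ∫ w', ∫ w, kW w w' ∂PW ∂PW := by
  refine ⟨?_, fun x x' ↦ ?_⟩
  · have hmem : ∀ x, f x ∈ (Submodule.span ℝ (Set.range h)).topologicalClosure := fun x ↦
      hf x ▸ integral_mem_topologicalClosure (hint x) fun w ↦ Submodule.subset_span ⟨(x, w), rfl⟩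
    rw [isCenteredGaussianProcess_iff_span_subset] at hGP ⊢
    calc (Submodule.span ℝ (Set.range f) : Set (Lp ℝ 2 P))
        ⊆ (Submodule.span ℝ (Set.range h)).topologicalClosure :=
          Submodule.span_le.2 (Set.range_subset_iff.2 hmem)
      _ ⊆ centeredGaussianL2 P := closure_minimal hGP isClosed_centeredGaussianL2
  · simp_rw [← L2.real_inner_eq_integral_mul] at hcov ⊢
    rw [hf, hf, inner_integral_integral_s9 (hint x) (hint x')]
    simp_rw [hcov, integral_const_mul]

/-- Marginalizing the outcome proxy out of a Gaussian-process bridge function. If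
`(h_{(x,w)})` is a centered Gaussian process with product covariance
`E[h_{(x,w)} h_{(x′,w′)}] = k_X(x,x′)·k_W(w,w′)` and `f_x = ∫ h_{(x,w)} dP_W(w)` for a
probability measure `P_W` on `W`, then `(f_x)` is a centered Gaussian process with
covariance `r(x, x′) = k_X(x, x′) · c_W`, where
`c_W = ∬ k_W(w, w′) dP_W(w) dP_W(w′)`. -/
theorem marginalized_bridge_process_proxy
    {Ω : Type*} [MeasurableSpace Ω] (P : Measure Ω) [IsProbabilityMeasure P]
    {X W : Type*} [MeasurableSpace X] [MeasurableSpace W]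
    (h : X × W → Lp ℝ 2 P)
    (hmeas : ∀ x, StronglyMeasurable (fun w => h (x, w)))
    (hGP : IsCenteredGaussianProcess P (fun p => ⇑(h p)))
    (kX : X → X → ℝ) (kW : W → W → ℝ)
    (hcov : ∀ x x' w w', (∫ ω, h (x, w) ω * h (x', w') ω ∂P) = kX x x' * kW w w')
    (PW : Measure W) [IsProbabilityMeasure PW]
    (hint : ∀ x, Integrable (fun w => h (x, w)) PW)
    (f : X → Lp ℝ 2 P) (hf : ∀ x, f x = ∫ w, h (x, w) ∂PW) :
    IsCenteredGaussianProcess P (fun x => ⇑(f x)) ∧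
    ∀ x x', (∫ ω, f x ω * f x' ω ∂P)
      = kX x x' * ∫ w', ∫ w, kW w w' ∂PW ∂PW :=
  marginalized_bridge_process_proxy_general P h hGP kX kW hcov PW hint f hf
end
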